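/- There exist ε̄ > 0 and C > 0, depending only on λ_top := max_i λ_i and the spectral gap g := min{|λ_i| : λ_i ≠ 0}, such that the following holds for every ε₀ ∈ (0, ε̄]. Let h ∈ H with ‖h‖_{H_W} < ∞ satisfy ‖P_lie h‖² + |⟨P⁻h, L P⁻h⟩| + ‖P⁰_ess h‖² ≤ ε₀·‖h‖². Then ⟨P_ess h, L P_ess h⟩ ≥ C^{−1}·‖h‖². -/

import Mathlib

open Set Filter

noncomputable section

/-- The squared weighted norm `‖h‖²_{H_W} = Σ_i (1 + λ_i⁻) ⟨h, Y_i⟩²`. -/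
def HWsq {H : Type*} [NormedAddCommGroup H] [InnerProductSpace ℝ H]
    (Y : HilbertBasis ℕ ℝ H) (lam : ℕ → ℝ) (h : H) : ℝ :=
  ∑' i : ℕ, (1 + max (-(lam i)) 0) * (inner ℝ h (Y i) : ℝ) ^ 2

/-- Finiteness of the weighted norm `‖h‖_{H_W}`. -/
def HWfin {H : Type*} [NormedAddCommGroup H] [InnerProductSpace ℝ H]
    (Y : HilbertBasis ℕ ℝ H) (lam : ℕ → ℝ) (h : H) : Prop :=
  Summable fun i : ℕ => (1 + max (-(lam i)) 0) * (inner ℝ h (Y i) : ℝ) ^ 2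

/-- The orthogonal projection onto the closed span of `{Y i : i ∈ S}`. -/
def proj {H : Type*} [NormedAddCommGroup H] [InnerProductSpace ℝ H]
    (Y : HilbertBasis ℕ ℝ H) (S : Set ℕ) (h : H) : H :=
  ∑' i : ℕ, S.indicator (fun j => (inner ℝ h (Y j) : ℝ) • (Y j : H)) i

/-- The quadratic form `⟨P_S h, L (P_S h)⟩ = Σ_{i ∈ S} λ_i ⟨h, Y_i⟩²`. -/
def quadL {H : Type*} [NormedAddCommGroup H] [InnerProductSpace ℝ H]
    (Y : HilbertBasis ℕ ℝ H) (lam : ℕ → ℝ) (S : Set ℕ) (h : H) : ℝ :=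
  ∑' i : ℕ, S.indicator (fun j => lam j * (inner ℝ h (Y j) : ℝ) ^ 2) i

/-- Squares of the coefficients of `h` in a Hilbert basis are summable. -/
lemma coeff_sq_summable {H : Type*} [NormedAddCommGroup H] [InnerProductSpace ℝ H]
    (Y : HilbertBasis ℕ ℝ H) (h : H) :
    Summable fun i : ℕ => (inner ℝ h (Y i) : ℝ) ^ 2 := by
  have hm : Memℓp (⇑(Y.repr h)) 2 := (Y.repr h).property
  have := hm.summable (p := 2) (by norm_num)
  have heq : (fun i : ℕ => ‖Y.repr h i‖ ^ (2 : ENNReal).toReal)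
      = fun i : ℕ => (inner ℝ h (Y i) : ℝ) ^ 2 := by
    funext i
    rw [Y.repr_apply_apply, real_inner_comm]
    rw [ENNReal.toReal_ofNat, Real.rpow_two, Real.norm_eq_abs, sq_abs]
  rwa [heq] at this

/-- Parseval: `‖h‖² = Σ ⟨h, Y_i⟩²`. -/
lemma norm_sq_eq_tsum {H : Type*} [NormedAddCommGroup H] [InnerProductSpace ℝ H]
    (Y : HilbertBasis ℕ ℝ H) (h : H) :
    ‖h‖ ^ 2 = ∑' i : ℕ, (inner ℝ h (Y i) : ℝ) ^ 2 := by
  have h1 : ‖h‖ = ‖Y.repr h‖ := (Y.repr.norm_map h).symm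
  have h2 := lp.norm_rpow_eq_tsum (p := 2) (by norm_num) (Y.repr h)
  rw [h1]
  have : (‖Y.repr h‖ : ℝ) ^ (2 : ENNReal).toReal = ‖Y.repr h‖ ^ 2 := by
    rw [ENNReal.toReal_ofNat, Real.rpow_two]
  rw [← this, h2]
  congr 1
  funext i
  rw [ENNReal.toReal_ofNat, Real.rpow_two, Y.repr_apply_apply, real_inner_comm,
    Real.norm_eq_abs, sq_abs]

/-- The squared norm of the projection is the partial sum of squared coefficients. -/
lemma norm_proj_sq {H : Type*} [NormedAddCommGroup H] [InnerProductSpace ℝ H]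
    (Y : HilbertBasis ℕ ℝ H) (S : Set ℕ) (h : H) :
    ‖proj Y S h‖ ^ 2 = ∑' i : ℕ, S.indicator (fun j => (inner ℝ h (Y j) : ℝ) ^ 2) i := by
  classical
  set f : ℕ → ℝ := fun i => (Y.repr h) i with hf
  have hfval : ∀ i, f i = (inner ℝ h (Y i) : ℝ) := by
    intro i; rw [hf]; simp only []
    rw [Y.repr_apply_apply, real_inner_comm]
  have hsum : Summable fun i : ℕ => ‖S.indicator f i‖ ^ (2 : ENNReal).toReal := by
    refine Summable.of_nonneg_of_le (fun i => ?_) (fun i => ?_)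
      (((Y.repr h).property).summable (p := 2) (by norm_num))
    · positivity
    · gcongr
      by_cases hi : i ∈ S
      · rw [Set.indicator_of_mem hi]
      · rw [Set.indicator_of_notMem hi]; simp
  have mem : Memℓp (S.indicator f) 2 := memℓp_gen hsum
  set fS : lp (fun _ : ℕ => ℝ) 2 := ⟨S.indicator f, mem⟩ with hfS
  have hcoe : ∀ i, (fS : ∀ _ : ℕ, ℝ) i = S.indicator f i := fun i => rfl
  have hps : HasSum (fun i => (fS : ∀ _ : ℕ, ℝ) i • Y i) (Y.repr.symm fS) :=
    Y.hasSum_repr_symm fS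
  have hpt : (fun i : ℕ => S.indicator (fun j => (inner ℝ h (Y j) : ℝ) • (Y j : H)) i)
      = fun i => (fS : ∀ _ : ℕ, ℝ) i • Y i := by
    funext i
    rw [hcoe]
    by_cases hi : i ∈ S
    · rw [Set.indicator_of_mem hi, Set.indicator_of_mem hi, hfval]
    · rw [Set.indicator_of_notMem hi, Set.indicator_of_notMem hi, zero_smul]
  have hproj : proj Y S h = Y.repr.symm fS := by
    rw [proj, hpt, hps.tsum_eq]
  rw [hproj]
  have hn : ‖Y.repr.symm fS‖ = ‖fS‖ := Y.repr.symm.norm_map fS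
  have h2 := lp.norm_rpow_eq_tsum (p := 2) (by norm_num) fS
  rw [ENNReal.toReal_ofNat] at h2
  rw [hn, ← Real.rpow_two, h2]
  congr 1
  funext i
  rw [Real.rpow_two, hcoe]
  by_cases hi : i ∈ S
  · rw [Set.indicator_of_mem hi, Set.indicator_of_mem hi, hfval, Real.norm_eq_abs, sq_abs]
  · rw [Set.indicator_of_notMem hi, Set.indicator_of_notMem hi]; simp

/-- Coercivity of the entropy quadratic form (upper bound by entropy): under the
stated dominance of the essential unstable modes, `⟨P_ess h, L P_ess h⟩ ≥ C⁻¹‖h‖²`.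
The constants depend only on `λ_top = λ_0` and the spectral gap `g`. -/
theorem entropy_coercivity (Λ g : ℝ) (hg : 0 < g) :
    ∃ εbar C : ℝ, 0 < εbar ∧ 0 < C ∧
      ∀ (H : Type) [NormedAddCommGroup H] [InnerProductSpace ℝ H] [CompleteSpace H],
      ∀ (Y : HilbertBasis ℕ ℝ H) (lam : ℕ → ℝ),
        Antitone lam → Tendsto lam atTop atBot →
        lam 0 = Λ →
        (∀ i : ℕ, lam i ≠ 0 → g ≤ |lam i|) →
        ∀ Sess : Set ℕ,
        ∀ ε₀ : ℝ, 0 < ε₀ → ε₀ ≤ εbar →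
        ∀ h : H, HWfin Y lam h →
          ‖proj Y Sessᶜ h‖ ^ 2 + |quadL Y lam {i | lam i < 0} h| +
              ‖proj Y {i | i ∈ Sess ∧ lam i = 0} h‖ ^ 2 ≤ ε₀ * ‖h‖ ^ 2 →
          C⁻¹ * ‖h‖ ^ 2 ≤ quadL Y lam Sess h := by
  refine ⟨g / (4 * (g + 1)), 2 / g, by positivity, by positivity, ?_⟩
  intro H _ _ _ Y lam hanti _ hΛ hgap Sess ε₀ hε₀pos hε₀le h hW hyp
  classical
  -- notation
  set b : ℕ → ℝ := fun i => (inner ℝ h (Y i) : ℝ) ^ 2 with hb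
  have hb0 : ∀ i, 0 ≤ b i := fun i => sq_nonneg _
  have hbsum : Summable b := coeff_sq_summable Y h
  -- summability of |lam| * b
  have hlamle : ∀ i, lam i ≤ Λ := fun i => hΛ ▸ hanti (Nat.zero_le i)
  have hW' : Summable fun i => (1 + max (-(lam i)) 0) * b i := hW
  have habs : Summable fun i => |lam i| * b i := by
    refine Summable.of_nonneg_of_le (fun i => by positivity) (fun i => ?_)
      (hW'.mul_left (|Λ| + 1))
    have h1 : |lam i| ≤ |Λ| + max (-(lam i)) 0 := by
      rcases le_or_gt 0 (lam i) with hi | hi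
      · rw [abs_of_nonneg hi]
        have h4 : (0:ℝ) ≤ max (-(lam i)) 0 := le_max_right _ _
        linarith [(hlamle i).trans (le_abs_self Λ)]
      · rw [abs_of_neg hi, max_eq_left (by linarith : (0:ℝ) ≤ -(lam i))]
        linarith [abs_nonneg Λ]
    have h2 : max (-(lam i)) 0 ≥ 0 := le_max_right _ _
    have h3 : (0:ℝ) ≤ |Λ| := abs_nonneg _
    nlinarith [mul_le_mul_of_nonneg_right h1 (hb0 i),
      mul_nonneg (mul_nonneg h3 h2) (hb0 i), hb0 i]
  have hlb : Summable fun i => lam i * b i := by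
    rw [← summable_abs_iff]
    refine habs.congr fun i => ?_
    rw [abs_mul, abs_of_nonneg (hb0 i)]
  -- the sets
  set Sp : Set ℕ := Sess ∩ {i | 0 < lam i} with hSp
  set S0 : Set ℕ := {i | i ∈ Sess ∧ lam i = 0} with hS0
  set Sn : Set ℕ := Sess ∩ {i | lam i < 0} with hSn
  set Neg : Set ℕ := {i | lam i < 0} with hNeg
  set N : ℝ := ‖h‖ ^ 2 with hN
  have hNeq : N = ∑' i, b i := norm_sq_eq_tsum Y h
  have hN0 : 0 ≤ N := sq_nonneg _
  -- summable families
  have sumSp : Summable (Sp.indicator fun i => lam i * b i) := hlb.indicator _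
  have sumS0 : Summable (S0.indicator fun i => lam i * b i) := hlb.indicator _
  have sumSn : Summable (Sn.indicator fun i => lam i * b i) := hlb.indicator _
  have sumNeg : Summable (Neg.indicator fun i => lam i * b i) := hlb.indicator _
  have sumbSp : Summable (Sp.indicator b) := hbsum.indicator _
  have sumbS0 : Summable (S0.indicator b) := hbsum.indicator _
  have sumbSn : Summable (Sn.indicator b) := hbsum.indicator _
  have sumbNeg : Summable (Neg.indicator b) := hbsum.indicator _
  have sumbC : Summable (Sessᶜ.indicator b) := hbsum.indicator _
  -- split of quadL over Sess
  have hsplit : quadL Y lam Sess h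
      = (∑' i, Sp.indicator (fun i => lam i * b i) i)
        + (∑' i, S0.indicator (fun i => lam i * b i) i)
        + (∑' i, Sn.indicator (fun i => lam i * b i) i) := by
    rw [quadL, ← Summable.tsum_add sumSp sumS0, ← Summable.tsum_add (sumSp.add sumS0) sumSn]
    congr 1
    funext i
    by_cases hi : i ∈ Sess
    · rcases lt_trichotomy (lam i) 0 with hl | hl | hl
      · rw [Set.indicator_of_mem hi, Set.indicator_of_notMem (fun hmem => by rw [hSp, Set.mem_inter_iff, Set.mem_setOf_eq] at hmem; linarith [hmem.2]),
          Set.indicator_of_notMem (fun hmem => by rw [hS0, Set.mem_setOf_eq] at hmem; linarith [hmem.2]),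
          Set.indicator_of_mem (by exact ⟨hi, hl⟩)]
        ring
      · rw [Set.indicator_of_mem hi, Set.indicator_of_notMem (fun hmem => by rw [hSp, Set.mem_inter_iff, Set.mem_setOf_eq] at hmem; linarith [hmem.2]),
          Set.indicator_of_mem (show i ∈ S0 from ⟨hi, hl⟩),
          Set.indicator_of_notMem (fun hmem => by rw [hSn, Set.mem_inter_iff, hNeg, Set.mem_setOf_eq] at hmem; linarith [hmem.2])]
        ring
      · rw [Set.indicator_of_mem hi, Set.indicator_of_mem (show i ∈ Sp from ⟨hi, hl⟩),
          Set.indicator_of_notMem (fun hmem => by rw [hS0, Set.mem_setOf_eq] at hmem; linarith [hmem.2]),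
          Set.indicator_of_notMem (fun hmem => by rw [hSn, Set.mem_inter_iff, hNeg, Set.mem_setOf_eq] at hmem; linarith [hmem.2])]
        ring
    · rw [Set.indicator_of_notMem hi,
        Set.indicator_of_notMem (fun hmem => hi hmem.1),
        Set.indicator_of_notMem (fun hmem => hi hmem.1),
        Set.indicator_of_notMem (fun hmem => hi hmem.1)]
      ring
  -- the zero part vanishes
  have hzero : (∑' i, S0.indicator (fun i => lam i * b i) i) = 0 := by
    have : S0.indicator (fun i => lam i * b i) = fun _ => (0:ℝ) := by
      funext i
      by_cases hi : i ∈ S0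
      · rw [Set.indicator_of_mem hi, hi.2, zero_mul]
      · rw [Set.indicator_of_notMem hi]
    rw [this, tsum_zero]
  -- positive part dominates g times mass
  have hpos : g * (∑' i, Sp.indicator b i) ≤ ∑' i, Sp.indicator (fun i => lam i * b i) i := by
    rw [← tsum_mul_left]
    refine Summable.tsum_le_tsum (fun i => ?_) (sumbSp.mul_left g) sumSp
    by_cases hi : i ∈ Sp
    · rw [Set.indicator_of_mem hi, Set.indicator_of_mem hi]
      have hgi : g ≤ lam i := by
        have := hgap i (ne_of_gt hi.2)
        rwa [abs_of_pos hi.2] at this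
      exact mul_le_mul_of_nonneg_right hgi (hb0 i)
    · rw [Set.indicator_of_notMem hi, Set.indicator_of_notMem hi, mul_zero]
  -- negative part over Sess is at least the full negative part
  have hnegle : (∑' i, Neg.indicator (fun i => lam i * b i) i)
      ≤ ∑' i, Sn.indicator (fun i => lam i * b i) i := by
    refine Summable.tsum_le_tsum (fun i => ?_) sumNeg sumSn
    by_cases hi : i ∈ Neg
    · by_cases hi' : i ∈ Sess
      · rw [Set.indicator_of_mem hi, Set.indicator_of_mem (show i ∈ Sn from ⟨hi', hi⟩)]
      · rw [Set.indicator_of_mem hi, Set.indicator_of_notMem (fun hmem => hi' hmem.1)]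
        exact mul_nonpos_of_nonpos_of_nonneg (le_of_lt hi) (hb0 i)
    · rw [Set.indicator_of_notMem hi, Set.indicator_of_notMem (fun hmem => hi hmem.2)]
  -- the full negative part is nonpositive; identify |quadL Neg|
  have hqnegpos : quadL Y lam Neg h ≤ 0 := by
    refine tsum_nonpos fun i => ?_
    by_cases hi : i ∈ Neg
    · rw [Set.indicator_of_mem hi]
      exact mul_nonpos_of_nonpos_of_nonneg (le_of_lt hi) (hb0 i)
    · rw [Set.indicator_of_notMem hi]
  have hqneg_eq : quadL Y lam Neg h = ∑' i, Neg.indicator (fun i => lam i * b i) i := rfl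
  -- extract the three bounds from the hypothesis
  have hnc : ‖proj Y Sessᶜ h‖ ^ 2 ≤ ε₀ * N := by
    linarith [hyp, abs_nonneg (quadL Y lam Neg h), sq_nonneg ‖proj Y S0 h‖]
  have hnq : |quadL Y lam Neg h| ≤ ε₀ * N := by
    linarith [hyp, sq_nonneg ‖proj Y Sessᶜ h‖, sq_nonneg ‖proj Y S0 h‖]
  have hn0 : ‖proj Y S0 h‖ ^ 2 ≤ ε₀ * N := by
    linarith [hyp, sq_nonneg ‖proj Y Sessᶜ h‖, abs_nonneg (quadL Y lam Neg h)]
  -- mass on negative modes is controlled by |quadL Neg| / g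
  have hmassneg : g * (∑' i, Neg.indicator b i) ≤ |quadL Y lam Neg h| := by
    rw [abs_of_nonpos hqnegpos, hqneg_eq, ← tsum_neg, ← tsum_mul_left]
    refine Summable.tsum_le_tsum (fun i => ?_) (sumbNeg.mul_left g) sumNeg.neg
    by_cases hi : i ∈ Neg
    · rw [Set.indicator_of_mem hi, Set.indicator_of_mem hi]
      have hgi : g ≤ -(lam i) := by
        have := hgap i (ne_of_lt hi)
        rwa [abs_of_neg hi] at this
      have := mul_le_mul_of_nonneg_right hgi (hb0 i)
      linarith
    · rw [Set.indicator_of_notMem hi, Set.indicator_of_notMem hi, mul_zero, neg_zero]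
  -- Parseval decomposition of the mass
  have hmass : N = (∑' i, Sessᶜ.indicator b i) + (∑' i, Sp.indicator b i)
      + (∑' i, S0.indicator b i) + (∑' i, Sn.indicator b i) := by
    rw [hNeq, ← Summable.tsum_add sumbC sumbSp, ← Summable.tsum_add (sumbC.add sumbSp) sumbS0,
      ← Summable.tsum_add ((sumbC.add sumbSp).add sumbS0) sumbSn]
    congr 1
    funext i
    by_cases hi : i ∈ Sess
    · rw [Set.indicator_of_notMem (by simpa using hi)]
      rcases lt_trichotomy (lam i) 0 with hl | hl | hl
      · rw [Set.indicator_of_notMem (fun hmem => by rw [hSp, Set.mem_inter_iff, Set.mem_setOf_eq] at hmem; linarith [hmem.2]),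
          Set.indicator_of_notMem (fun hmem => by rw [hS0, Set.mem_setOf_eq] at hmem; linarith [hmem.2]),
          Set.indicator_of_mem (show i ∈ Sn from ⟨hi, hl⟩)]
        ring
      · rw [Set.indicator_of_notMem (fun hmem => by rw [hSp, Set.mem_inter_iff, Set.mem_setOf_eq] at hmem; linarith [hmem.2]),
          Set.indicator_of_mem (show i ∈ S0 from ⟨hi, hl⟩),
          Set.indicator_of_notMem (fun hmem => by rw [hSn, Set.mem_inter_iff, hNeg, Set.mem_setOf_eq] at hmem; linarith [hmem.2])]
        ring
      · rw [Set.indicator_of_mem (show i ∈ Sp from ⟨hi, hl⟩),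
          Set.indicator_of_notMem (fun hmem => by rw [hS0, Set.mem_setOf_eq] at hmem; linarith [hmem.2]),
          Set.indicator_of_notMem (fun hmem => by rw [hSn, Set.mem_inter_iff, hNeg, Set.mem_setOf_eq] at hmem; linarith [hmem.2])]
        ring
    · rw [Set.indicator_of_mem (by simpa using hi),
        Set.indicator_of_notMem (fun hmem => hi hmem.1),
        Set.indicator_of_notMem (fun hmem => hi hmem.1),
        Set.indicator_of_notMem (fun hmem => hi hmem.1)]
      ring
  -- identify the norm terms
  have hcompl : (∑' i, Sessᶜ.indicator b i) = ‖proj Y Sessᶜ h‖ ^ 2 :=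
    (norm_proj_sq Y Sessᶜ h).symm
  have hs0 : (∑' i, S0.indicator b i) = ‖proj Y S0 h‖ ^ 2 := (norm_proj_sq Y S0 h).symm
  -- Sn ⊆ Neg mass bound
  have hsnneg : (∑' i, Sn.indicator b i) ≤ ∑' i, Neg.indicator b i := by
    refine Summable.tsum_le_tsum (fun i => ?_) sumbSn sumbNeg
    by_cases hi : i ∈ Sn
    · rw [Set.indicator_of_mem hi, Set.indicator_of_mem hi.2]
    · by_cases hi' : i ∈ Neg
      · rw [Set.indicator_of_notMem hi, Set.indicator_of_mem hi']
        exact hb0 i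
      · rw [Set.indicator_of_notMem hi, Set.indicator_of_notMem hi']
  -- put everything together
  have hnegmass : (∑' i, Neg.indicator b i) ≤ ε₀ * N / g := by
    rw [le_div_iff₀ hg, mul_comm]
    exact hmassneg.trans hnq
  have hSpmass : N - ε₀ * N - ε₀ * N - ε₀ * N / g ≤ ∑' i, Sp.indicator b i := by
    have := hsnneg.trans hnegmass
    rw [hcompl, hs0] at hmass
    linarith [hnc, hn0]
  have hqSess : g * (N - ε₀ * N - ε₀ * N - ε₀ * N / g) - ε₀ * N ≤ quadL Y lam Sess h := by
    rw [hsplit, hzero]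
    have h1 : g * (N - ε₀ * N - ε₀ * N - ε₀ * N / g) ≤ g * (∑' i, Sp.indicator b i) :=
      mul_le_mul_of_nonneg_left hSpmass (le_of_lt hg)
    have h2 : -(ε₀ * N) ≤ ∑' i, Sn.indicator (fun i => lam i * b i) i := by
      have := (neg_abs_le (quadL Y lam Neg h)).trans (hqneg_eq ▸ hnegle)
      have h3 : -(ε₀ * N) ≤ -|quadL Y lam Neg h| := neg_le_neg hnq
      linarith
    linarith [hpos]
  -- final arithmetic
  rw [show ((2:ℝ)/g)⁻¹ = g/2 by rw [inv_div]]
  refine le_trans ?_ hqSess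
  have hε : ε₀ ≤ g / (4 * (g + 1)) := hε₀le
  have key : g * (N - ε₀ * N - ε₀ * N - ε₀ * N / g) - ε₀ * N
      = g * N - ε₀ * N * (2 * g + 2) := by
    field_simp
    ring
  rw [key]
  have hεN : ε₀ * N * (2 * g + 2) ≤ g / 2 * N := by
    have h1 : ε₀ * (2 * g + 2) ≤ g / 2 := by
      have h4 : ε₀ * (4 * (g + 1)) ≤ g := by
        rw [← le_div_iff₀ (by positivity : (0:ℝ) < 4 * (g + 1))]
        exact hε
      nlinarith
    calc ε₀ * N * (2 * g + 2) = ε₀ * (2 * g + 2) * N := by ring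
      _ ≤ g / 2 * N := mul_le_mul_of_nonneg_right h1 hN0
  linarith
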